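/- arXiv:math/0501343 — 4 statements merged into one kernel-verified Lean document; each statement's English description precedes it below -/
import Mathlib

section
/- Let f : X → Y and u : Y' → Y be continuous maps of topological spaces, and let X' := {(y', x, p) | y' ∈ Y', x ∈ X, p a path in Y from u(y') to f(x)}, topologized as a subspace of Y' × X × C([0,1],Y), with projection f' : X' → Y', (y',x,p) ↦ y'. Then for every y' ∈ Y', the homotopy fiber of f' at y' is homotopy equivalent to the homotopy fiber of f : X → Y at the point u(y'). -/
open scoped unitInterval

/-- The homotopy fiber of `f : X → Y` at `y : Y`: pairs `(x, p)` with `p` a path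
from `f x` to `y`, topologized as a subspace of `X × C(I, Y)`. -/
abbrev HomotopyFiber {X Y : Type*} [TopologicalSpace X] [TopologicalSpace Y]
    (f : X → Y) (y : Y) : Type _ :=
  {p : X × C(I, Y) // p.2 0 = f p.1 ∧ p.2 1 = y}

/-- The homotopy pullback `X' = {(y', x, p) | p : path from u(y') to f(x)}`,
topologized as a subspace of `Y' × X × C(I, Y)`. -/
abbrev PullbackSpace {X Y Y' : Type*} [TopologicalSpace X] [TopologicalSpace Y]
    [TopologicalSpace Y'] (f : X → Y) (u : Y' → Y) : Type _ :=
  {q : Y' × X × C(I, Y) // q.2.2 0 = u q.1 ∧ q.2.2 1 = f q.2.1}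

/-- The projection `f' : X' → Y'`. -/
def pbToY' {X Y Y' : Type*} [TopologicalSpace X] [TopologicalSpace Y] [TopologicalSpace Y']
    (f : X → Y) (u : Y' → Y) : PullbackSpace f u → Y' :=
  fun q => q.1.1

/-!
A point of the homotopy fiber of `f'` over `y'` consists of `x : X`, a point `y''` of `Y'` with a
path `γ` from `y''` to `y'`, and a path `p` from `u y''` to `f x`. Forgetting `y''` and following
`p` backwards and then `u ∘ γ` gives a point of the homotopy fiber of `f` over `u y'`; conversely
`(x, r)` goes to `y'' = y'` with the constant path `γ` and the reversed path `r⁻¹`.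

One composite sends `(x, r)` to `(x, r · const)`, which is reparametrized back to `(x, r)`.
For the other composite, slide the base point along `γ`: at time `s` it is `γ s`, the path to
`y'` is the rest of `γ`, and the path to `f x` is the part of `p⁻¹ · (u ∘ γ)` from `u (γ s)`
back to `f x`. All these paths are subpaths of one fixed path on moving subintervals, which makes
the homotopies start and end exactly at the maps they connect.
-/

open unitInterval Set.Icc

noncomputable def unitInterval.half : I := ⟨1 / 2, by norm_num, by norm_num⟩

@[simp] lemma unitInterval.coe_half : (half : ℝ) = 1 / 2 := rfl

namespace Path

variable {X : Type*} [TopologicalSpace X] {x y z : X}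

theorem trans_apply_convexComb_zero_half (γ : Path x y) (γ' : Path y z) (t : I) :
    γ.trans γ' (convexComb 0 half t) = γ t := by
  rw [← extend_extends', extend_trans_of_le_half _ _ (by simp; linarith [t.2.2]),
    ← extend_extends']
  congr 1
  simp
  ring

theorem trans_apply_convexComb_half_one (γ : Path x y) (γ' : Path y z) (t : I) :
    γ.trans γ' (convexComb half 1 t) = γ' t := by
  rw [← extend_extends', extend_trans_of_half_le _ _ (by simp; linarith [t.2.1]),
    ← extend_extends']
  congr 1
  simp
  ring

@[simp] theorem subpath_apply (γ : Path x y) (t₀ t₁ t : I) :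
    γ.subpath t₀ t₁ t = γ (convexComb t₀ t₁ t) := rfl

theorem continuous_uncurry_subpath {ι : Type*} [TopologicalSpace ι] {a b : ι → X}
    (γ : ∀ i, Path (a i) (b i)) (hγ : Continuous ↿γ) {t₀ t₁ : ι → I}
    (h₀ : Continuous t₀) (h₁ : Continuous t₁) :
    Continuous ↿fun i => (γ i).subpath (t₀ i) (t₁ i) :=
  hγ.comp <| continuous_fst.prodMk <| continuous_convexComb_prod.comp <|
    (h₀.comp continuous_fst).prodMk <| (h₁.comp continuous_fst).prodMk continuous_snd

theorem map_continuous_family {Y ι : Type*} [TopologicalSpace Y] [TopologicalSpace ι]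
    {a b : ι → X} (γ : ∀ i, Path (a i) (b i)) (hγ : Continuous ↿γ) {f : X → Y}
    (hf : Continuous f) : Continuous ↿fun i => (γ i).map hf :=
  hf.comp hγ

end Path

namespace HomotopyFiber

variable {X Y : Type*} [TopologicalSpace X] [TopologicalSpace Y] {g : X → Y} {y : Y}

def path (a : HomotopyFiber g y) : Path (g a.1.1) y := ⟨a.1.2, a.2.1, a.2.2⟩

def mk (x : X) (γ : Path (g x) y) : HomotopyFiber g y := ⟨(x, γ), γ.source, γ.target⟩

lemma ext {a b : HomotopyFiber g y} (h₁ : a.1.1 = b.1.1) (h₂ : ∀ t, a.path t = b.path t) :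
    a = b :=
  Subtype.ext <| Prod.ext h₁ <| ContinuousMap.ext h₂

lemma continuous_path_apply {A : Type*} [TopologicalSpace A] {a : A → HomotopyFiber g y}
    {t : A → I} (ha : Continuous a) (ht : Continuous t) : Continuous fun z => (a z).path (t z) :=
  continuous_eval.comp ((continuous_subtype_val.comp ha).snd.prodMk ht)

lemma continuous_path {A : Type*} [TopologicalSpace A] {a : A → HomotopyFiber g y}
    (ha : Continuous a) : Continuous ↿fun i => (a i).path :=
  continuous_path_apply (ha.comp continuous_fst) continuous_snd

lemma continuous_mk {A : Type*} [TopologicalSpace A] {x : A → X} (hx : Continuous x)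
    {γ : ∀ a, Path (g (x a)) y} (hγ : Continuous ↿γ) : Continuous fun a => mk (x a) (γ a) :=
  (hx.prodMk (ContinuousMap.continuous_of_continuous_uncurry _ hγ)).subtype_mk _

def pathFrom (a : HomotopyFiber g y) (s : I) : Path (a.path s) y :=
  (a.path.subpath s 1).cast rfl a.path.target.symm

lemma pathFrom_zero (a : HomotopyFiber g y) : ⇑(a.pathFrom 0) = a.path := by
  ext t
  simp [pathFrom]

lemma pathFrom_one (a : HomotopyFiber g y) : ⇑(a.pathFrom 1) = fun _ => y := by
  ext t
  simp [pathFrom]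

lemma continuous_pathFrom : Continuous ↿fun z : I × HomotopyFiber g y => z.2.pathFrom z.1 :=
  Path.continuous_uncurry_subpath (fun z : I × HomotopyFiber g y => z.2.path)
    (continuous_path continuous_snd) continuous_fst continuous_const

lemma continuous_uncurry_path_trans_refl {A : Type*} [TopologicalSpace A]
    {a : A → HomotopyFiber g y} (ha : Continuous a) :
    Continuous ↿fun i => (a i).path.trans (Path.refl y) :=
  Path.trans_continuous_family _ (continuous_path ha) (fun _ => Path.refl y) continuous_const

noncomputable def transRefl : C(HomotopyFiber g y, HomotopyFiber g y) where
  toFun b := mk b.1.1 (b.path.trans (Path.refl y))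
  continuous_toFun := continuous_mk (by fun_prop) (continuous_uncurry_path_trans_refl continuous_id)

noncomputable def transReflHomotopy :
    ContinuousMap.Homotopy (ContinuousMap.id (HomotopyFiber g y)) transRefl where
  toFun z := mk z.2.1.1 (((z.2.path.trans (Path.refl y)).subpath 0 (convexComb half 1 z.1)).cast
    (z.2.path.trans (Path.refl y)).source.symm
    (Path.trans_apply_convexComb_half_one z.2.path (Path.refl y) z.1).symm)
  continuous_toFun := continuous_mk (by fun_prop) <|
    Path.continuous_uncurry_subpath _ (continuous_uncurry_path_trans_refl continuous_snd)
      continuous_const (t₁ := fun z => convexComb half 1 z.1) (by fun_prop)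
  map_zero_left b := ext rfl fun t => by
    change b.path.trans (Path.refl y) (convexComb 0 (convexComb half 1 0) t) = b.path t
    rw [convexComb_zero, Path.trans_apply_convexComb_zero_half]
  map_one_left b := ext rfl fun t => by
    change b.path.trans (Path.refl y) (convexComb 0 (convexComb half 1 1) t) = _
    rw [convexComb_one, convexComb_zero_one]
    rfl

end HomotopyFiber

namespace PullbackSpace

variable {X Y Y' : Type*} [TopologicalSpace X] [TopologicalSpace Y] [TopologicalSpace Y']
  {f : X → Y} {u : Y' → Y}

def path (q : PullbackSpace f u) : Path (u q.1.1) (f q.1.2.1) := ⟨q.1.2.2, q.2.1, q.2.2⟩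

def mk (y' : Y') (x : X) (γ : Path (u y') (f x)) : PullbackSpace f u :=
  ⟨(y', x, γ), γ.source, γ.target⟩

lemma ext {q r : PullbackSpace f u} (h₁ : q.1.1 = r.1.1) (h₂ : q.1.2.1 = r.1.2.1)
    (h₃ : ∀ t, q.path t = r.path t) : q = r :=
  Subtype.ext <| Prod.ext h₁ <| Prod.ext h₂ <| ContinuousMap.ext h₃

lemma continuous_path {A : Type*} [TopologicalSpace A] {q : A → PullbackSpace f u}
    (hq : Continuous q) : Continuous ↿fun i => (q i).path :=
  continuous_eval.comp ((continuous_subtype_val.comp (hq.comp continuous_fst)).snd.snd.prodMk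
    continuous_snd)

lemma continuous_mk {A : Type*} [TopologicalSpace A] {y' : A → Y'} (hy' : Continuous y')
    {x : A → X} (hx : Continuous x) {γ : ∀ a, Path (u (y' a)) (f (x a))}
    (hγ : Continuous ↿γ) : Continuous fun a => mk (y' a) (x a) (γ a) :=
  (hy'.prodMk (hx.prodMk (ContinuousMap.continuous_of_continuous_uncurry _ hγ))).subtype_mk _

end PullbackSpace

namespace HomotopyFiber

variable {X Y Y' : Type*} [TopologicalSpace X] [TopologicalSpace Y] [TopologicalSpace Y']
  {f : X → Y} {u : Y' → Y} (hu : Continuous u) {y' : Y'}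

noncomputable def pullbackPath (a : HomotopyFiber (pbToY' f u) y') :
    Path (f a.1.1.1.2.1) (u y') :=
  a.1.1.path.symm.trans (a.path.map hu)

lemma continuous_pullbackPath {A : Type*} [TopologicalSpace A]
    {a : A → HomotopyFiber (pbToY' f u) y'} (ha : Continuous a) :
    Continuous ↿fun i => (a i).pullbackPath hu :=
  Path.trans_continuous_family (fun i => (a i).1.1.path.symm)
    (Path.symm_continuous_family _ (PullbackSpace.continuous_path (by fun_prop)))
    (fun i => (a i).path.map hu) (Path.map_continuous_family _ (continuous_path ha) hu)

lemma pullbackPath_apply_convexComb_zero_half (a : HomotopyFiber (pbToY' f u) y') (t : I) :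
    a.pullbackPath hu (convexComb 0 half t) = a.1.1.path (σ t) :=
  Path.trans_apply_convexComb_zero_half _ _ t

lemma pullbackPath_apply_convexComb_half_one (a : HomotopyFiber (pbToY' f u) y') (t : I) :
    a.pullbackPath hu (convexComb half 1 t) = u (a.path t) :=
  Path.trans_apply_convexComb_half_one _ _ t

/-- `pullbackPath` passes through `u (a.path s)` at time `convexComb half 1 s = (1 + s) / 2`. -/
noncomputable def pullbackPathFrom (a : HomotopyFiber (pbToY' f u) y') (s : I) :
    Path (u (a.path s)) (f a.1.1.1.2.1) :=
  ((a.pullbackPath hu).subpath (convexComb half 1 s) 0).cast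
    (a.pullbackPath_apply_convexComb_half_one hu s).symm (a.pullbackPath hu).source.symm

lemma pullbackPathFrom_zero (a : HomotopyFiber (pbToY' f u) y') :
    ⇑(a.pullbackPathFrom hu 0) = a.1.1.path := by
  ext t
  simp only [pullbackPathFrom, Path.cast_coe, Path.subpath_apply, convexComb_zero]
  rw [← convexComb_symm, pullbackPath_apply_convexComb_zero_half, symm_symm]

lemma pullbackPathFrom_one (a : HomotopyFiber (pbToY' f u) y') :
    ⇑(a.pullbackPathFrom hu 1) = (a.pullbackPath hu).symm := by
  ext t
  simp only [pullbackPathFrom, Path.cast_coe, Path.subpath_apply, convexComb_one]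
  rw [← convexComb_symm, convexComb_zero_one]
  rfl

lemma continuous_pullbackPathFrom :
    Continuous ↿fun z : I × HomotopyFiber (pbToY' f u) y' => z.2.pullbackPathFrom hu z.1 :=
  Path.continuous_uncurry_subpath _ (continuous_pullbackPath hu (f := f) continuous_snd)
    (t₀ := fun z => convexComb half 1 z.1) (by fun_prop) (continuous_const (y := 0))

end HomotopyFiber

section

variable {X Y Y' : Type*} [TopologicalSpace X] [TopologicalSpace Y] [TopologicalSpace Y']
  {f : X → Y} {u : Y' → Y} (hu : Continuous u) (y' : Y')

noncomputable def pullbackFiberToFiber :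
    C(HomotopyFiber (pbToY' f u) y', HomotopyFiber f (u y')) where
  toFun a := .mk a.1.1.1.2.1 (a.pullbackPath hu)
  continuous_toFun := HomotopyFiber.continuous_mk (by fun_prop)
    (HomotopyFiber.continuous_pullbackPath hu continuous_id)

noncomputable def fiberToPullbackFiber :
    C(HomotopyFiber f (u y'), HomotopyFiber (pbToY' f u) y') where
  toFun b := .mk (.mk y' b.1.1 b.path.symm) (Path.refl y')
  continuous_toFun := by
    refine HomotopyFiber.continuous_mk
      (PullbackSpace.continuous_mk continuous_const (by fun_prop) ?_) ?_
    · exact Path.symm_continuous_family _ (HomotopyFiber.continuous_path continuous_id)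
    · exact continuous_const.comp continuous_fst

noncomputable def pullbackFiberHomotopy :
    ContinuousMap.Homotopy (ContinuousMap.id (HomotopyFiber (pbToY' f u) y'))
      ((fiberToPullbackFiber y').comp (pullbackFiberToFiber hu y')) where
  toFun z := .mk (.mk (z.2.path z.1) z.2.1.1.1.2.1 (z.2.pullbackPathFrom hu z.1)) (z.2.pathFrom z.1)
  continuous_toFun :=
    HomotopyFiber.continuous_mk
      (PullbackSpace.continuous_mk
        (HomotopyFiber.continuous_path_apply continuous_snd continuous_fst) (by fun_prop)
        (HomotopyFiber.continuous_pullbackPathFrom hu))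
      HomotopyFiber.continuous_pathFrom
  map_zero_left a := by
    refine HomotopyFiber.ext (PullbackSpace.ext a.path.source rfl fun t => ?_) fun t => ?_
    · exact congrFun (a.pullbackPathFrom_zero hu) t
    · exact congrFun a.pathFrom_zero t
  map_one_left a := by
    refine HomotopyFiber.ext (PullbackSpace.ext a.path.target rfl fun t => ?_) fun t => ?_
    · exact congrFun (a.pullbackPathFrom_one hu) t
    · exact congrFun a.pathFrom_one t

lemma pullbackFiberToFiber_comp_fiberToPullbackFiber :
    (pullbackFiberToFiber (f := f) hu y').comp (fiberToPullbackFiber y') =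
      HomotopyFiber.transRefl := by
  ext b : 1
  refine HomotopyFiber.ext rfl fun t => ?_
  change (b.path.symm.symm.trans ((Path.refl y').map hu)) t = (b.path.trans (Path.refl (u y'))) t
  rw [Path.symm_symm]
  rfl

noncomputable def pullbackFiberHomotopyEquiv :
    ContinuousMap.HomotopyEquiv (HomotopyFiber (pbToY' f u) y') (HomotopyFiber f (u y')) where
  toFun := pullbackFiberToFiber hu y'
  invFun := fiberToPullbackFiber y'
  left_inv := ⟨(pullbackFiberHomotopy hu y').symm⟩
  right_inv := by
    rw [pullbackFiberToFiber_comp_fiberToPullbackFiber]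
    exact ⟨HomotopyFiber.transReflHomotopy.symm⟩

end

theorem statement4_general {X Y Y' : Type*} [TopologicalSpace X] [TopologicalSpace Y]
    [TopologicalSpace Y']
    {f : X → Y} {u : Y' → Y} (hu : Continuous u) (y' : Y') :
    Nonempty
      (ContinuousMap.HomotopyEquiv (HomotopyFiber (pbToY' f u) y') (HomotopyFiber f (u y'))) :=
  ⟨pullbackFiberHomotopyEquiv hu y'⟩

theorem statement4 {X Y Y' : Type*} [TopologicalSpace X] [TopologicalSpace Y]
    [TopologicalSpace Y']
    {f : X → Y} (hf : Continuous f) {u : Y' → Y} (hu : Continuous u) (y' : Y') :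
    Nonempty
      (ContinuousMap.HomotopyEquiv (HomotopyFiber (pbToY' f u) y') (HomotopyFiber f (u y'))) :=
  statement4_general hu y'
end

section
/- Let 𝒞 be an abelian category and x, y, z objects of 𝒞 such that the sets Hom(x,z) and Hom(x,x) are finite. Then the set M := {f : x → z | f is a monomorphism and coker(f) ≅ y} is finite, the set S of subobjects x' of z such that the underlying object of x' is isomorphic to x and the quotient z/x' (the cokernel of the inclusion x' → z) is isomorphic to y is finite, and |M| = |Aut(x)| · |S|, where Aut(x) is the group of automorphisms of x. -/
/-! A monomorphism `f : x ⟶ z` is determined by the subobject `[f]` it represents together with the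
isomorphism `x ≅ [f]` it induces. Fixing, for every subobject `s` with `s ≅ x`, one isomorphism
`e_s : s ≅ x`, the map `(a, s) ↦ a ≫ e_s⁻¹ ≫ s.arrow` is therefore a bijection from `Aut x × S` onto
the monomorphisms `x ⟶ z` whose subobject lies in `S`. Having cokernel isomorphic to `y` is
invariant under precomposition with isomorphisms, so it can be read off the subobject. -/

open CategoryTheory CategoryTheory.Limits

namespace CategoryTheory.Subobject

variable {C : Type*} [Category C] {x z : C} {P : ∀ ⦃w : C⦄, (w ⟶ z) → Prop}
    (hP : ∀ ⦃w w' : C⦄ (e : w ≅ w') (g : w' ⟶ z), P (e.hom ≫ g) ↔ P g)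

theorem mk_iso_hom_comp_arrow {A : C} (s : Subobject z) (i : A ≅ (s : C)) :
    mk (i.hom ≫ s.arrow) = s :=
  mk_eq_of_comm _ i rfl

noncomputable def autProdToMono :
    (x ≅ x) × {s : Subobject z // Nonempty ((s : C) ≅ x) ∧ P s.arrow} →
      {f : x ⟶ z // Mono f ∧ P f} :=
  fun p => ⟨(p.1 ≪≫ p.2.2.1.some.symm).hom ≫ p.2.1.arrow, inferInstance, (hP _ _).2 p.2.2.2⟩

theorem autProdToMono_injective :
    Function.Injective (autProdToMono (x := x) hP) := by
  rintro ⟨a, s, hs⟩ ⟨a', s', hs'⟩ h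
  replace h : (a ≪≫ hs.1.some.symm).hom ≫ s.arrow = (a' ≪≫ hs'.1.some.symm).hom ≫ s'.arrow :=
    congrArg Subtype.val h
  obtain rfl : s = s' := by
    have hmk := mk_iso_hom_comp_arrow s (a ≪≫ hs.1.some.symm)
    simp only [h, mk_iso_hom_comp_arrow] at hmk
    exact hmk.symm
  obtain rfl : a = a' :=
    Iso.ext <| (cancel_mono _).1 <| by simpa only [Iso.trans_hom, Category.assoc] using h
  rfl

theorem autProdToMono_surjective :
    Function.Surjective (autProdToMono (x := x) hP) := by
  rintro ⟨f, hf, hPf⟩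
  let s : {s : Subobject z // Nonempty ((s : C) ≅ x) ∧ P s.arrow} :=
    ⟨mk f, ⟨underlyingIso f⟩, by rwa [← underlyingIso_hom_comp_eq_mk, hP]⟩
  refine ⟨((underlyingIso f).symm ≪≫ s.2.1.some, s), Subtype.ext ?_⟩
  simp only [autProdToMono, Iso.trans_hom, Iso.symm_hom, Category.assoc, Iso.hom_inv_id_assoc]
  exact underlyingIso_arrow f

noncomputable def autProdEquivMono :
    (x ≅ x) × {s : Subobject z // Nonempty ((s : C) ≅ x) ∧ P s.arrow} ≃
      {f : x ⟶ z // Mono f ∧ P f} :=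
  Equiv.ofBijective _ ⟨autProdToMono_injective hP, autProdToMono_surjective hP⟩

end CategoryTheory.Subobject

theorem CategoryTheory.Limits.nonempty_cokernel_iso_hom_comp_iff {C : Type*} [Category C]
    [HasZeroMorphisms C] {w w' z y : C} (e : w ≅ w') (g : w' ⟶ z) [HasCokernel g] :
    Nonempty (cokernel (e.hom ≫ g) ≅ y) ↔ Nonempty (cokernel g ≅ y) :=
  ⟨fun ⟨i⟩ => ⟨(cokernelEpiComp e.hom g).symm ≪≫ i⟩,
    fun ⟨i⟩ => ⟨cokernelEpiComp e.hom g ≪≫ i⟩⟩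

theorem statement7_general {C : Type*} [Category C] [Abelian C] (x y z : C)
    [Finite (x ⟶ z)] :
    {f : x ⟶ z | Mono f ∧ Nonempty (cokernel f ≅ y)}.Finite ∧
    {x' : Subobject z |
      Nonempty ((x' : C) ≅ x) ∧ Nonempty (cokernel x'.arrow ≅ y)}.Finite ∧
    Nat.card {f : x ⟶ z | Mono f ∧ Nonempty (cokernel f ≅ y)} =
      Nat.card (Aut x) *
        Nat.card {x' : Subobject z |
          Nonempty ((x' : C) ≅ x) ∧ Nonempty (cokernel x'.arrow ≅ y)} := by
  let e := Subobject.autProdEquivMono (x := x) (z := z)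
    (P := fun _ (g : _ ⟶ z) => Nonempty (cokernel g ≅ y))
    fun _ _ e g => nonempty_cokernel_iso_hom_comp_iff e g
  have : Finite (Aut x × {x' : Subobject z |
      Nonempty ((x' : C) ≅ x) ∧ Nonempty (cokernel x'.arrow ≅ y)}) := .of_equiv _ e.symm
  exact ⟨Set.toFinite _, Set.finite_coe_iff.1 (.prod_right (Aut x)),
    (Nat.card_congr e).symm.trans (Nat.card_prod _ _)⟩

/-- In an abelian category, if `Hom(x, z)` and `Hom(x, x)` are finite, then the set `M` of
monomorphisms `x → z` with cokernel isomorphic to `y` is finite, the set `S` of subobjects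
`x'` of `z` with `x' ≅ x` and `z/x' ≅ y` is finite, and `|M| = |Aut(x)| · |S|`. -/
theorem statement7 {C : Type*} [Category C] [Abelian C] (x y z : C)
    [Finite (x ⟶ z)] [Finite (x ⟶ x)] :
    {f : x ⟶ z | Mono f ∧ Nonempty (cokernel f ≅ y)}.Finite ∧
    {x' : Subobject z |
      Nonempty ((x' : C) ≅ x) ∧ Nonempty (cokernel x'.arrow ≅ y)}.Finite ∧
    Nat.card {f : x ⟶ z | Mono f ∧ Nonempty (cokernel f ≅ y)} =
      Nat.card (Aut x) *
        Nat.card {x' : Subobject z |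
          Nonempty ((x' : C) ≅ x) ∧ Nonempty (cokernel x'.arrow ≅ y)} :=
  statement7_general x y z
end

section
/- Let 𝒞 be an abelian category and k, y, b objects such that Hom(k,y), Hom(y,b), Hom(b,k) and Hom(y,y) are finite sets. Let V(k,y,b) be the set of pairs (i,p) where i : k → y is a monomorphism, p : y → b is an epimorphism, and ker p = im i (i.e. 0 → k → y → b → 0 is a short exact sequence). The group Aut(y) acts on V(k,y,b) by φ·(i,p) := (φ∘i, p∘φ^{-1}). Then the number of Aut(y)-orbits on V(k,y,b) equals |V(k,y,b)| · |Hom(b,k)| / |Aut(y)| in ℚ. -/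
/-!
Orbit–stabilizer counting: for any group action, `|X| · |S| = |X/G| · |G|` as soon as every
stabilizer is in bijection with a fixed type `S`, because `Σ x, Stab(x) ≃ X/G × G`. For a short
exact sequence `0 → k →ⁱ y →ᵖ b → 0`, the stabilizer of `(i, p)` is in bijection with `Hom(b, k)`
via `a ↦ 1 + p ≫ a ≫ i`: this is invertible with inverse `1 - p ≫ a ≫ i` because `i ≫ p = 0`, and
conversely if `φ` fixes `i` and `p`, then `φ - 1` kills `i` and is killed by `p`, so by exactness
it factors as `p ≫ a ≫ i`.
-/

open CategoryTheory Limits MulAction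

namespace MulAction

variable {G X : Type*} [Group G] [MulAction G X]

variable (G X) in
noncomputable def sigmaStabilizerEquivOrbitsProdGroup :
    (Σ x : X, stabilizer G x) ≃ orbitRel.Quotient G X × G :=
  (Equiv.subtypeProdEquivSigmaSubtype fun (x : X) (g : G) => g ∈ stabilizer G x).symm.trans <|
    ((Equiv.prodComm X G).subtypeEquiv fun _ => Iff.rfl).trans <|
      (Equiv.subtypeProdEquivSigmaSubtype _).trans (sigmaFixedByEquivOrbitsProdGroup G X)

theorem card_mul_card_eq_card_orbits_mul_card_group {S : Type*}
    (e : ∀ x : X, stabilizer G x ≃ S) :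
    Nat.card X * Nat.card S = Nat.card (orbitRel.Quotient G X) * Nat.card G := by
  rw [← Nat.card_prod, ← Nat.card_prod, ← Nat.card_congr (Equiv.sigmaEquivProd X S),
    ← Nat.card_congr (Equiv.sigmaCongrRight e)]
  exact Nat.card_congr (sigmaStabilizerEquivOrbitsProdGroup G X)

end MulAction

namespace CategoryTheory

namespace Aut

variable {C : Type*} [Category C]

lemma finite_of_finite_end (y : C) [Finite (y ⟶ y)] : Finite (Aut y) :=
  have : Finite (End y) := ‹Finite (y ⟶ y)›
  .of_equiv _ (unitsEndEquivAut y).toEquiv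

variable {k y b : C}

instance mulActionHomProd : MulAction (Aut y) ((k ⟶ y) × (y ⟶ b)) where
  smul φ ip := (ip.1 ≫ φ.hom, φ.inv ≫ ip.2)
  one_smul _ := Prod.ext (Category.comp_id _) (Category.id_comp _)
  mul_smul _ _ _ := Prod.ext (Category.assoc _ _ _).symm (Category.assoc _ _ _)

lemma smul_homProd (φ : Aut y) (ip : (k ⟶ y) × (y ⟶ b)) :
    φ • ip = (ip.1 ≫ φ.hom, φ.inv ≫ ip.2) := rfl

lemma mem_stabilizer_homProd_iff {φ : Aut y} {i : k ⟶ y} {p : y ⟶ b} :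
    φ ∈ stabilizer (Aut y) (i, p) ↔ i ≫ φ.hom = i ∧ φ.hom ≫ p = p := by
  rw [mem_stabilizer_iff, smul_homProd, Prod.ext_iff]
  exact and_congr Iff.rfl ((Iso.inv_comp_eq (φ : y ≅ y)).trans eq_comm)

def quotEquivOrbitRelQuotient (p : SubMulAction (Aut y) ((k ⟶ y) × (y ⟶ b))) :
    Quot (fun v v' : p => ∃ φ : Aut y,
        (v' : (k ⟶ y) × (y ⟶ b)).1 = (v : (k ⟶ y) × (y ⟶ b)).1 ≫ φ.hom ∧
        (v' : (k ⟶ y) × (y ⟶ b)).2 = φ.inv ≫ (v : (k ⟶ y) × (y ⟶ b)).2) ≃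
      orbitRel.Quotient (Aut y) p :=
  Quot.congrRight fun v v' => Iff.trans (exists_congr fun φ => by
    rw [Subtype.ext_iff, SubMulAction.val_smul, smul_homProd, Prod.ext_iff, eq_comm,
      eq_comm (a := (v' : (k ⟶ y) × (y ⟶ b)).2)]) mem_orbit_symm

end Aut

namespace ShortComplex

section Preadditive

variable {C : Type*} [Category C] [Preadditive C] (S : ShortComplex C)

@[simps]
def transvection (a : S.X₃ ⟶ S.X₁) : Aut S.X₂ where
  hom := 𝟙 _ + S.g ≫ a ≫ S.f
  inv := 𝟙 _ - S.g ≫ a ≫ S.f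
  hom_inv_id := by simp [Preadditive.add_comp, Preadditive.comp_sub]
  inv_hom_id := by simp [Preadditive.sub_comp, Preadditive.comp_add]

lemma transvection_mem_stabilizer (a : S.X₃ ⟶ S.X₁) :
    S.transvection a ∈ stabilizer (Aut S.X₂) (S.f, S.g) := by
  rw [Aut.mem_stabilizer_homProd_iff]
  simp [Preadditive.comp_add, Preadditive.add_comp]

lemma transvection_injective [Mono S.f] [Epi S.g] : Function.Injective S.transvection := by
  intro a a' h
  have h' := congrArg Iso.hom h
  simp only [transvection_hom, add_right_inj] at h'
  rwa [cancel_epi, cancel_mono] at h'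

end Preadditive

variable {C : Type*} [Category C] [Abelian C] {S : ShortComplex C}

lemma ShortExact.exists_g_comp_comp_f_eq (hS : S.ShortExact) (e : S.X₂ ⟶ S.X₂)
    (hfe : S.f ≫ e = 0) (heg : e ≫ S.g = 0) : ∃ a : S.X₃ ⟶ S.X₁, S.g ≫ a ≫ S.f = e := by
  have := hS.mono_f
  have := hS.epi_g
  obtain ⟨d, rfl⟩ := hS.exact.desc' e hfe
  have hdg : d ≫ S.g = 0 := by rw [← cancel_epi S.g, ← Category.assoc, heg, comp_zero]
  obtain ⟨a, rfl⟩ := hS.exact.lift' d hdg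
  exact ⟨a, rfl⟩

lemma ShortExact.exists_transvection_eq (hS : S.ShortExact) {φ : Aut S.X₂}
    (hφ : φ ∈ stabilizer (Aut S.X₂) (S.f, S.g)) : ∃ a, S.transvection a = φ := by
  obtain ⟨hf, hg⟩ := Aut.mem_stabilizer_homProd_iff.mp hφ
  obtain ⟨a, ha⟩ := hS.exists_g_comp_comp_f_eq (φ.hom - 𝟙 _)
    (by simp [Preadditive.comp_sub, hf]) (by simp [Preadditive.sub_comp, hg])
  exact ⟨a, Iso.ext (by simp [ha])⟩

noncomputable def ShortExact.stabilizerEquiv (hS : S.ShortExact) :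
    stabilizer (Aut S.X₂) (S.f, S.g) ≃ (S.X₃ ⟶ S.X₁) :=
  have := hS.mono_f
  have := hS.epi_g
  (Equiv.ofBijective (fun a => ⟨S.transvection a, S.transvection_mem_stabilizer a⟩)
    ⟨fun _ _ h => S.transvection_injective (congrArg Subtype.val h),
      fun φ => (hS.exists_transvection_eq φ.2).imp fun _ h => Subtype.ext h⟩).symm

end ShortComplex

variable {C : Type*} [Category C]

def shortExactPairs [HasZeroMorphisms C] (k y b : C) :
    SubMulAction (Aut y) ((k ⟶ y) × (y ⟶ b)) where
  carrier := {ip | Mono ip.1 ∧ Epi ip.2 ∧ ∃ w : ip.1 ≫ ip.2 = 0, (ShortComplex.mk ip.1 ip.2 w).Exact}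
  smul_mem' φ ip := fun ⟨h1, h2, w, hex⟩ => by
    have hφ : φ.hom ≫ φ.inv ≫ ip.2 = ip.2 := Iso.hom_inv_id_assoc (φ : y ≅ y) _
    have w' : (ip.1 ≫ φ.hom) ≫ φ.inv ≫ ip.2 = 0 := by rw [Category.assoc, hφ, w]
    have e : ShortComplex.mk ip.1 ip.2 w ≅ ShortComplex.mk _ _ w' :=
      ShortComplex.isoMk (Iso.refl _) φ (Iso.refl _) (by simp) (by simp [hφ])
    have hS := ShortComplex.shortExact_of_iso e (.mk' hex h1 h2)
    exact ⟨hS.mono_f, hS.epi_g, w', hS.exact⟩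

lemma mem_shortExactPairs_iff [HasZeroMorphisms C] {k y b : C} {ip : (k ⟶ y) × (y ⟶ b)} :
    ip ∈ shortExactPairs k y b ↔ ∃ w : ip.1 ≫ ip.2 = 0, (ShortComplex.mk ip.1 ip.2 w).ShortExact :=
  ⟨fun ⟨h1, h2, w, h⟩ => ⟨w, .mk' h h1 h2⟩, fun ⟨w, h⟩ => ⟨h.mono_f, h.epi_g, w, h.exact⟩⟩

variable [Abelian C]

noncomputable def stabilizerShortExactPairsEquiv {k y b : C} (v : shortExactPairs k y b) :
    stabilizer (Aut y) v ≃ (b ⟶ k) :=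
  (MulEquiv.subgroupCongr (SubMulAction.stabilizer_of_subMul v)).toEquiv.trans
    (mem_shortExactPairs_iff.mp v.2).choose_spec.stabilizerEquiv

theorem card_orbits_shortExactPairs_mul_card_aut (k y b : C) :
    Nat.card (Quot (fun v v' : shortExactPairs k y b => ∃ φ : Aut y,
        (v' : (k ⟶ y) × (y ⟶ b)).1 = (v : (k ⟶ y) × (y ⟶ b)).1 ≫ φ.hom ∧
        (v' : (k ⟶ y) × (y ⟶ b)).2 = φ.inv ≫ (v : (k ⟶ y) × (y ⟶ b)).2)) * Nat.card (Aut y) =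
      Nat.card (shortExactPairs k y b) * Nat.card (b ⟶ k) := by
  rw [Nat.card_congr (Aut.quotEquivOrbitRelQuotient _)]
  exact (card_mul_card_eq_card_orbits_mul_card_group stabilizerShortExactPairsEquiv).symm

end CategoryTheory

theorem statement9_general {C : Type*} [Category C] [Abelian C] (k y b : C)
    [Finite (y ⟶ y)]
    (V : Set ((k ⟶ y) × (y ⟶ b)))
    (hV : V = {ip | Mono ip.1 ∧ Epi ip.2 ∧
      ∃ w : ip.1 ≫ ip.2 = 0, (ShortComplex.mk ip.1 ip.2 w).Exact}) :
    (Nat.card (Quot (fun v v' : V => ∃ φ : Aut y,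
        (v' : (k ⟶ y) × (y ⟶ b)).1 = (v : (k ⟶ y) × (y ⟶ b)).1 ≫ φ.hom ∧
        (v' : (k ⟶ y) × (y ⟶ b)).2 = φ.inv ≫ (v : (k ⟶ y) × (y ⟶ b)).2)) : ℚ) =
      (Nat.card V : ℚ) * (Nat.card (b ⟶ k) : ℚ) / (Nat.card (Aut y) : ℚ) := by
  subst hV
  have := Aut.finite_of_finite_end y
  rw [eq_div_iff (Nat.cast_ne_zero.mpr Nat.card_pos.ne')]
  exact_mod_cast card_orbits_shortExactPairs_mul_card_aut k y b

/-- Let `V(k, y, b)` be the set of pairs `(i, p)` forming a short exact sequence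
`0 → k →ⁱ y →ᵖ b → 0` in an abelian category with the indicated finiteness properties.
`Aut(y)` acts on `V(k, y, b)` by `φ · (i, p) = (φ ∘ i, p ∘ φ⁻¹)`; the number of orbits
equals `|V(k, y, b)| · |Hom(b, k)| / |Aut(y)|` in `ℚ`. -/
theorem statement9 {C : Type*} [Category C] [Abelian C] (k y b : C)
    [Finite (k ⟶ y)] [Finite (y ⟶ b)] [Finite (b ⟶ k)] [Finite (y ⟶ y)]
    (V : Set ((k ⟶ y) × (y ⟶ b)))
    (hV : V = {ip | Mono ip.1 ∧ Epi ip.2 ∧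
      ∃ w : ip.1 ≫ ip.2 = 0, (ShortComplex.mk ip.1 ip.2 w).Exact}) :
    (Nat.card (Quot (fun v v' : V => ∃ φ : Aut y,
        (v' : (k ⟶ y) × (y ⟶ b)).1 = (v : (k ⟶ y) × (y ⟶ b)).1 ≫ φ.hom ∧
        (v' : (k ⟶ y) × (y ⟶ b)).2 = φ.inv ≫ (v : (k ⟶ y) × (y ⟶ b)).2)) : ℚ) =
      (Nat.card V : ℚ) * (Nat.card (b ⟶ k) : ℚ) / (Nat.card (Aut y) : ℚ) :=
  statement9_general k y b V hV
end

section
/- Let 𝒜 be an abelian category in which Ext groups are defined, and let u : y → x be a morphism in 𝒜 with kernel k := ker(u) and cokernel c := coker(u). Assume Ext²(c,k) = 0. In the derived category D(𝒜), for any distinguished triangle single(y) → single(x) → Z → single(y)[1] whose first morphism is the image of u under the degree-zero single-complex functor single : 𝒜 → D(𝒜), the object Z is isomorphic to single(c) ⊕ single(k)[1]. -/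
open CategoryTheory CategoryTheory.Limits CategoryTheory.Pretriangulated CategoryTheory.Triangulated

universe w v u

/-- Let `u : y ⟶ x` be a morphism in an abelian category `𝒜` with kernel `k` and
cokernel `c`, and assume `Ext²(c, k) = 0` (using the identification
`Ext²(a,b) ≅ Hom_{D(𝒜)}(single a, (single b)⟦2⟧)`). Then in any distinguished triangle
`single y → single x → Z → (single y)[1]` in the derived category whose first morphism is
`single(u)`, the third object `Z` is isomorphic to `single c ⊞ (single k)⟦1⟧`. -/
theorem statement11 {C : Type u} [Category.{v} C] [Abelian C] [HasDerivedCategory.{w} C]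
    {y x : C} (u : y ⟶ x)
    (hExt2 : Subsingleton
      ((DerivedCategory.singleFunctor C 0).obj (cokernel u) ⟶
        (((DerivedCategory.singleFunctor C 0).obj (kernel u))⟦(2 : ℤ)⟧)))
    (Z : DerivedCategory C)
    (g : (DerivedCategory.singleFunctor C 0).obj x ⟶ Z)
    (h : Z ⟶ ((DerivedCategory.singleFunctor C 0).obj y)⟦(1 : ℤ)⟧)
    (hT : Triangle.mk ((DerivedCategory.singleFunctor C 0).map u) g h ∈
      distTriang (DerivedCategory C)) :
    Nonempty (Z ≅ (DerivedCategory.singleFunctor C 0).obj (cokernel u) ⊞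
      (((DerivedCategory.singleFunctor C 0).obj (kernel u))⟦(1 : ℤ)⟧)) := by
  set sf := DerivedCategory.singleFunctor C 0
  set p : y ⟶ Abelian.image u := Abelian.factorThruImage u with hp
  set ι : Abelian.image u ⟶ x := Abelian.image.ι u with hι
  have hw1 : kernel.ι u ≫ p = 0 := by
    rw [← cancel_mono ι]
    simp [hp, hι, Abelian.image.fac]
  -- short exact sequences
  have hfac : cokernel.π (kernel.ι u) ≫ (asIso (Abelian.coimageImageComparison u)).hom = p := by
    rw [← cancel_mono ι]
    simp [hp, hι]
  have hS1 : (ShortComplex.mk (kernel.ι u) p hw1).ShortExact := by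
    refine ShortComplex.ShortExact.mk' ?_ inferInstance inferInstance
    exact ShortComplex.exact_of_g_is_cokernel _
      (cokernel.cokernelIso (kernel.ι u) p (asIso (Abelian.coimageImageComparison u)) hfac)
  have hS2 : (ShortComplex.mk ι (cokernel.π u) (kernel.condition _)).ShortExact := by
    refine ShortComplex.ShortExact.mk' ?_ inferInstance inferInstance
    exact ShortComplex.exact_of_f_is_kernel _ (kernelIsKernel _)
  have h₁₂ : Triangle.mk (sf.map p) hS1.singleδ (-(sf.map (kernel.ι u))⟦(1:ℤ)⟧') ∈
      distTriang (DerivedCategory C) :=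
    rot_of_distTriang _ hS1.singleTriangle_distinguished
  have h₂₃ : Triangle.mk (sf.map ι) (sf.map (cokernel.π u)) hS2.singleδ ∈
      distTriang (DerivedCategory C) := hS2.singleTriangle_distinguished
  have comm : sf.map p ≫ sf.map ι = sf.map u := by
    rw [← Functor.map_comp, Abelian.image.fac]
  have H := someOctahedron comm h₁₂ h₂₃ hT
  have hδ : hS2.singleδ ≫ (hS1.singleδ)⟦(1:ℤ)⟧' = 0 := by
    have e : ((sf.obj (kernel u))⟦(1:ℤ)⟧)⟦(1:ℤ)⟧ ≅ (sf.obj (kernel u))⟦(2:ℤ)⟧ :=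
      ((shiftFunctorAdd' (DerivedCategory C) 1 1 2 (by norm_num)).app _).symm
    have : (hS2.singleδ ≫ (hS1.singleδ)⟦(1:ℤ)⟧') ≫ e.hom = 0 := Subsingleton.elim _ _
    rw [← cancel_mono e.hom, this, zero_comp]
  obtain ⟨e, -, -⟩ := exists_iso_binaryBiproduct_of_distTriang _ H.mem hδ
  exact ⟨e ≪≫ biprod.braiding _ _⟩
end
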